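/- arXiv:2401.09751 — 2 statements merged into one kernel-verified Lean document; each statement's English description precedes it below -/
import Mathlib

section
/- If (R, ρ) : (J, D) → (K, E) is a morphism in Diag→(X) such that the functor R : J → K is initial, then (R, ρ) is a weak equivalence. -/
open CategoryTheory

universe v u

variable {X : Type u} [Category.{v} X]

/-- A functor is a discrete opfibration if every morphism out of the image of an object
has a unique lift with prescribed domain. -/
def IsDiscreteOpfibration {Eb : Type u} [Category.{v} Eb] (π : Eb ⥤ X) : Prop :=
  ∀ (e : Eb) (y : X) (f : π.obj e ⟶ y),
    ∃! p : Σ e' : Eb, e ⟶ e', ∃ h : π.obj p.1 = y, π.map p.2 ≫ eqToHom h = f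

/-- A morphism `(R, ρ) : (J, D) ⟶ (K, E)` in `Diag→(X)` (`R : J ⥤ K`, `ρ : D ⟶ R ⋙ E`)
is a weak equivalence: for every discrete opfibration `π : Eb ⥤ X`, the induced functor
`Diag→(π)` is a discrete opfibration at `(R, ρ)`, i.e. every lift `Db` of `D` along `π`
extends uniquely to a lift `(R, ρb) : (J, Db) ⟶ (K, Ebar)` of the whole morphism. -/
def CovWeakEquivalence {J K : Type v} [SmallCategory J] [SmallCategory K]
    (D : J ⥤ X) (E : K ⥤ X) (R : J ⥤ K) (ρ : D ⟶ R ⋙ E) : Prop :=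
  ∀ (Eb : Type u) (_ : Category.{v} Eb) (π : Eb ⥤ X), IsDiscreteOpfibration π →
    ∀ (Db : J ⥤ Eb) (hDb : Db ⋙ π = D),
      ∃! p : Σ Ebar : { F : K ⥤ Eb // F ⋙ π = E }, (Db ⟶ R ⋙ Ebar.1),
        ∀ j : J, π.map (p.2.app j) =
          eqToHom (Functor.congr_obj hDb j) ≫ ρ.app j ≫
            eqToHom (Functor.congr_obj p.1.2 (R.obj j)).symm

/-!
Transporting a lift `Db` of `D` along `ρ` gives a lift `G` of `R ⋙ E` with a lift of `ρ`, and
every lift of `ρ` out of `Db` lands in `G`, since a discrete opfibration is faithful. It remains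
that `G` extends uniquely to a lift `F` of `E` with `R ⋙ F = G`: `F k` must be the target of the
lift of `E.map c.hom` at `G c.left` for any `c : R/k`, and this target is constant along
morphisms of `R/k`, hence well defined because `R/k` is nonempty and connected.
-/

universe v₁ u₁

theorem CategoryTheory.Functor.ext_of_comp_faithful {C D E : Type*} [Category C] [Category D]
    [Category E] {F F' : C ⥤ D} (π : D ⥤ E) [π.Faithful] (h : F ⋙ π = F' ⋙ π)
    (hobj : ∀ c, F.obj c = F'.obj c) : F = F' :=
  Functor.ext hobj fun _ _ g => π.map_injective <| by
    simpa [eqToHom_map] using Functor.congr_hom h g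

namespace IsDiscreteOpfibration

variable {Eb : Type u} [Category.{v} Eb] {π : Eb ⥤ X}

theorem faithful (hπ : IsDiscreteOpfibration π) : π.Faithful where
  map_injective {e e'} g g' h := by
    have := (hπ e _ (π.map g)).unique (y₁ := ⟨e', g⟩) (y₂ := ⟨e', g'⟩)
      ⟨rfl, by simp⟩ ⟨rfl, by simp [h]⟩
    simpa using this

theorem eq_of_lifts (hπ : IsDiscreteOpfibration π) {e e₁ e₂ : Eb} {y : X}
    {f : π.obj e ⟶ y} {g₁ : e ⟶ e₁} {g₂ : e ⟶ e₂} (h₁ : π.obj e₁ = y) (h₂ : π.obj e₂ = y)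
    (hg₁ : π.map g₁ = f ≫ eqToHom h₁.symm) (hg₂ : π.map g₂ = f ≫ eqToHom h₂.symm) :
    e₁ = e₂ :=
  congrArg Sigma.fst <| (hπ e y f).unique (y₁ := ⟨e₁, g₁⟩) (y₂ := ⟨e₂, g₂⟩)
    ⟨h₁, by simp [hg₁]⟩ ⟨h₂, by simp [hg₂]⟩

noncomputable def liftObj (hπ : IsDiscreteOpfibration π) (e : Eb) {y : X}
    (f : π.obj e ⟶ y) : Eb :=
  (hπ e y f).exists.choose.1

noncomputable def liftHom (hπ : IsDiscreteOpfibration π) (e : Eb) {y : X}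
    (f : π.obj e ⟶ y) : e ⟶ hπ.liftObj e f :=
  (hπ e y f).exists.choose.2

theorem obj_liftObj (hπ : IsDiscreteOpfibration π) (e : Eb) {y : X} (f : π.obj e ⟶ y) :
    π.obj (hπ.liftObj e f) = y :=
  (hπ e y f).exists.choose_spec.fst

@[simp]
theorem map_liftHom (hπ : IsDiscreteOpfibration π) (e : Eb) {y : X} (f : π.obj e ⟶ y) :
    π.map (hπ.liftHom e f) = f ≫ eqToHom (hπ.obj_liftObj e f).symm :=
  (comp_eqToHom_iff _ _ _).mp (hπ e y f).exists.choose_spec.snd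

theorem eq_liftObj (hπ : IsDiscreteOpfibration π) {e e' : Eb} {y : X} {f : π.obj e ⟶ y}
    {g : e ⟶ e'} (h : π.obj e' = y) (hg : π.map g = f ≫ eqToHom h.symm) :
    e' = hπ.liftObj e f :=
  hπ.eq_of_lifts h (hπ.obj_liftObj e f) hg (hπ.map_liftHom e f)

variable (hπ : IsDiscreteOpfibration π)

section LiftFunctor

variable {C : Type u₁} [Category.{v₁} C] (E : C ⥤ X) (O : C → Eb)
  (hO : ∀ c, π.obj (O c) = E.obj c)
  (hcod : ∀ ⦃c c' : C⦄ (g : c ⟶ c'), hπ.liftObj (O c) (eqToHom (hO c) ≫ E.map g) = O c')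

noncomputable def liftFunctor : C ⥤ Eb where
  obj := O
  map g := hπ.liftHom _ _ ≫ eqToHom (hcod g)
  map_id c := have := hπ.faithful; π.map_injective (by simp [eqToHom_map])
  map_comp g g' := have := hπ.faithful; π.map_injective (by simp [eqToHom_map])

theorem liftFunctor_comp : hπ.liftFunctor E O hO hcod ⋙ π = E :=
  CategoryTheory.Functor.ext hO fun _ _ _ => by simp [liftFunctor, eqToHom_map]

end LiftFunctor

section Transport

variable {J : Type u₁} [Category.{v₁} J] {Db : J ⥤ Eb} {E : J ⥤ X} (τ : Db ⋙ π ⟶ E)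

theorem liftObj_liftObj_app {j j' : J} (u : j ⟶ j') :
    hπ.liftObj (hπ.liftObj (Db.obj j) (τ.app j)) (eqToHom (hπ.obj_liftObj _ _) ≫ E.map u) =
      hπ.liftObj (Db.obj j') (τ.app j') := by
  refine hπ.eq_of_lifts (f := τ.app j ≫ E.map u)
    (g₁ := hπ.liftHom _ _ ≫ hπ.liftHom _ _) (g₂ := Db.map u ≫ hπ.liftHom _ _)
    (hπ.obj_liftObj _ _) (hπ.obj_liftObj _ _) (by simp) ?_
  simp [← τ.naturality_assoc]

noncomputable def transport : J ⥤ Eb :=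
  hπ.liftFunctor E (fun j => hπ.liftObj (Db.obj j) (τ.app j)) (fun _ => hπ.obj_liftObj _ _)
    (fun _ _ => hπ.liftObj_liftObj_app τ)

theorem transport_comp : hπ.transport τ ⋙ π = E := hπ.liftFunctor_comp ..

noncomputable def toTransport : Db ⟶ hπ.transport τ where
  app j := hπ.liftHom (Db.obj j) (τ.app j)
  naturality j j' u := by
    have := hπ.faithful
    apply π.map_injective
    -- the objects of `transport` are `liftObj`s only after unfolding
    dsimp only [transport, liftFunctor]
    simp [eqToHom_map, ← τ.naturality_assoc]

@[simp]
theorem map_toTransport_app (j : J) :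
    π.map ((hπ.toTransport τ).app j) =
      τ.app j ≫ eqToHom (Functor.congr_obj (hπ.transport_comp τ) j).symm :=
  hπ.map_liftHom _ _

theorem eq_transport {G : J ⥤ Eb} (hG : G ⋙ π = E) (σ : Db ⟶ G)
    (hσ : ∀ j, π.map (σ.app j) = τ.app j ≫ eqToHom (Functor.congr_obj hG j).symm) :
    G = hπ.transport τ :=
  have := hπ.faithful
  Functor.ext_of_comp_faithful π (hG.trans (hπ.transport_comp τ).symm)
    fun j => hπ.eq_liftObj (Functor.congr_obj hG j) (hσ j)

end Transport

section Extension

variable {J K : Type u₁} [Category.{v₁} J] [Category.{v₁} K] {R : J ⥤ K} {E : K ⥤ X}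
  {G : J ⥤ Eb} (hG : G ⋙ π = R ⋙ E)

-- An `abbrev`, so that `simp` can compose a `liftHom` into it with one out of it.
noncomputable abbrev extensionObj {k : K} (c : CostructuredArrow R k) : Eb :=
  hπ.liftObj (G.obj c.left) (eqToHom (Functor.congr_obj hG c.left) ≫ E.map c.hom)

theorem obj_extensionObj {k : K} (c : CostructuredArrow R k) :
    π.obj (hπ.extensionObj hG c) = E.obj k :=
  hπ.obj_liftObj _ _

theorem extensionObj_eq_of_hom {k : K} {c c' : CostructuredArrow R k} (u : c ⟶ c') :
    hπ.extensionObj hG c = hπ.extensionObj hG c' := by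
  refine (hπ.eq_liftObj (g := G.map u.left ≫ hπ.liftHom _ _) (hπ.obj_liftObj _ _) ?_).symm
  have hu := Functor.congr_hom hG u.left
  have hw : E.map c.hom = E.map (R.map u.left) ≫ E.map c'.hom := by
    rw [← E.map_comp, CostructuredArrow.w u]
  simp only [Functor.comp_map] at hu
  simp [hu, hw]

theorem extensionObj_eq [R.Initial] {k : K} (c c' : CostructuredArrow R k) :
    hπ.extensionObj hG c = hπ.extensionObj hG c' :=
  constant_of_preserves_morphisms _ (fun _ _ u => hπ.extensionObj_eq_of_hom hG u) c c'

theorem liftObj_extensionObj [R.Initial] {k k' : K} (c : CostructuredArrow R k) (g : k ⟶ k') :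
    hπ.liftObj (hπ.extensionObj hG c) (eqToHom (hπ.obj_extensionObj hG c) ≫ E.map g) =
      hπ.extensionObj hG (CostructuredArrow.mk (c.hom ≫ g)) :=
  hπ.eq_liftObj (g := hπ.liftHom _ _ ≫ hπ.liftHom _ _) (hπ.obj_liftObj _ _) (by simp)

noncomputable def extension [R.Initial] : K ⥤ Eb :=
  hπ.liftFunctor E (fun k => hπ.extensionObj hG (Classical.arbitrary (CostructuredArrow R k)))
    (fun _ => hπ.obj_extensionObj hG _)
    (fun _ _ g => (hπ.liftObj_extensionObj hG _ g).trans (hπ.extensionObj_eq hG _ _))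

theorem extension_comp [R.Initial] : hπ.extension hG ⋙ π = E := hπ.liftFunctor_comp ..

theorem comp_extension [R.Initial] : R ⋙ hπ.extension hG = G :=
  have := hπ.faithful
  Functor.ext_of_comp_faithful π (by rw [Functor.assoc, extension_comp, hG]) fun j =>
    (hπ.extensionObj_eq hG _ (CostructuredArrow.mk (𝟙 (R.obj j)))).trans
      (hπ.eq_liftObj (g := 𝟙 (G.obj j)) (Functor.congr_obj hG j) (by simp)).symm

theorem eq_extension [R.Initial] {F : K ⥤ Eb} (hF : F ⋙ π = E) (hRF : R ⋙ F = G) :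
    F = hπ.extension hG :=
  have := hπ.faithful
  Functor.ext_of_comp_faithful π (hF.trans (hπ.extension_comp hG).symm) fun k => by
    subst hRF
    exact hπ.eq_liftObj (g := F.map (Classical.arbitrary (CostructuredArrow R k)).hom)
      (Functor.congr_obj hF k) (by simpa using Functor.congr_hom hF _)

end Extension

end IsDiscreteOpfibration

/-- If `(R, ρ) : (J, D) ⟶ (K, E)` is a morphism in `Diag→(X)` and the functor `R` is
initial, then `(R, ρ)` is a weak equivalence. -/
theorem covWeakEquivalence_of_initial {J K : Type v} [SmallCategory J] [SmallCategory K]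
    (D : J ⥤ X) (E : K ⥤ X) (R : J ⥤ K) (ρ : D ⟶ R ⋙ E) (hR : R.Initial) :
    CovWeakEquivalence D E R ρ := by
  intro Eb _ π hπ Db hDb
  subst hDb
  have := hπ.faithful
  have hG := hπ.transport_comp ρ
  refine ⟨⟨⟨hπ.extension hG, hπ.extension_comp hG⟩,
    hπ.toTransport ρ ≫ eqToHom (hπ.comp_extension hG).symm⟩, fun j => by simp [eqToHom_map], ?_⟩
  rintro ⟨⟨F, hF⟩, σ⟩ hσ
  have hRF : R ⋙ F = hπ.transport ρ :=
    hπ.eq_transport ρ (congrArg (R ⋙ ·) hF) σ fun j => by simpa using hσ j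
  obtain rfl := hπ.eq_extension hG hF hRF
  congr 1
  ext j
  exact π.map_injective (by simpa [eqToHom_map] using hσ j)
end

section
/- If (R, ρ) : (J, D) → (K, E) is a relatively initial morphism in Diag→(X), i.e., for every k ∈ K the relative comma category (R,ρ)/k is nonempty and connected, then (R, ρ) is a weak equivalence. -/
open CategoryTheory

universe v u

variable {X : Type u} [Category.{v} X]

/-- The relative comma category `(R, ρ)/k`: objects are pairs `(j, f : R j ⟶ k)`. -/
structure RelComma {J K : Type v} [SmallCategory J] [SmallCategory K]
    (D : J ⥤ X) (E : K ⥤ X) (R : J ⥤ K) (ρ : D ⟶ R ⋙ E) (k : K) : Type v where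
  pt : J
  arr : R.obj pt ⟶ k

/-- Morphisms `(j, f) ⟶ (j', f')` in `(R, ρ)/k` are morphisms `h : j ⟶ j'` in `J` with
`E(f') ∘ ρ_{j'} ∘ D(h) = E(f) ∘ ρ_j`. -/
instance {J K : Type v} [SmallCategory J] [SmallCategory K]
    (D : J ⥤ X) (E : K ⥤ X) (R : J ⥤ K) (ρ : D ⟶ R ⋙ E) (k : K) :
    Category (RelComma D E R ρ k) where
  Hom a b := { h : a.pt ⟶ b.pt //
    D.map h ≫ ρ.app b.pt ≫ E.map b.arr = ρ.app a.pt ≫ E.map a.arr }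
  id a := ⟨𝟙 a.pt, by simp⟩
  comp {a b c} f g := ⟨f.1 ≫ g.1, by
    rw [Functor.map_comp, Category.assoc, g.2, f.2]⟩
  id_comp f := Subtype.ext (Category.id_comp f.1)
  comp_id f := Subtype.ext (Category.comp_id f.1)
  assoc f g h := Subtype.ext (Category.assoc f.1 g.1 h.1)

section Aux

variable {X : Type u} [Category.{v} X] {Eb : Type u} [Category.{v} Eb] {π : Eb ⥤ X}

lemma IsDiscreteOpfibration.mapInj (hπ : IsDiscreteOpfibration π) {e e' : Eb}
    (p q : e ⟶ e') (h : π.map p = π.map q) : p = q := by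
  obtain ⟨c, -, huniq⟩ := hπ e (π.obj e') (π.map p)
  have h1 : (⟨e', p⟩ : Σ e'', e ⟶ e'') = c := huniq ⟨e', p⟩ ⟨rfl, by simp⟩
  have h2 : (⟨e', q⟩ : Σ e'', e ⟶ e'') = c := huniq ⟨e', q⟩ ⟨rfl, by simp [h]⟩
  have h3 := h1.trans h2.symm
  exact eq_of_heq (Sigma.mk.inj_iff.mp h3).2

/-- The canonical comparison map of a relative comma object. -/
def phiMap {J K : Type v} [SmallCategory J] [SmallCategory K]
    (D : J ⥤ X) (E : K ⥤ X) (R : J ⥤ K) (ρ : D ⟶ R ⋙ E)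
    (Db : J ⥤ Eb) (hDb : Db ⋙ π = D) {k : K} (a : RelComma D E R ρ k) :
    π.obj (Db.obj a.pt) ⟶ E.obj k :=
  eqToHom (Functor.congr_obj hDb a.pt) ≫ ρ.app a.pt ≫ E.map a.arr

end Aux

/-- If `(R, ρ) : (J, D) ⟶ (K, E)` is a relatively initial morphism in `Diag→(X)`,
i.e. every relative comma category `(R, ρ)/k` is (nonempty and) connected, then
`(R, ρ)` is a weak equivalence. -/
theorem covWeakEquivalence_of_relativelyInitial
    {J K : Type v} [SmallCategory J] [SmallCategory K]
    (D : J ⥤ X) (E : K ⥤ X) (R : J ⥤ K) (ρ : D ⟶ R ⋙ E)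
    (hrel : ∀ k : K, IsConnected (RelComma D E R ρ k)) :
    CovWeakEquivalence D E R ρ := by
  intro Eb instEb π hπ Db hDb
  have hinj : ∀ {e e' : Eb} (p q : e ⟶ e'), π.map p = π.map q → p = q :=
    fun p q h => hπ.mapInj p q h
  choose L hL hLu using hπ
  choose hLo hLm using hL
  have hDmap : ∀ {j j' : J} (u : j ⟶ j'), π.map (Db.map u) =
      eqToHom (Functor.congr_obj hDb j) ≫ D.map u ≫
        eqToHom (Functor.congr_obj hDb j').symm := by
    intro j j' u
    have := Functor.congr_hom hDb u
    simp only [Functor.comp_map] at this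
    exact this
  -- Step 1: the object part, with its universal property
  have main : ∀ k : K, ∃ (e : Eb) (he : π.obj e = E.obj k),
      (∀ a : RelComma D E R ρ k, ∃! l : Db.obj a.pt ⟶ e,
        π.map l = phiMap D E R ρ Db hDb a ≫ eqToHom he.symm) ∧
      (∀ (a : RelComma D E R ρ k) (p : Σ e', Db.obj a.pt ⟶ e'),
        (∃ h : π.obj p.1 = E.obj k, π.map p.2 ≫ eqToHom h = phiMap D E R ρ Db hDb a) →
          p.1 = e) := by
    intro k
    haveI := hrel k
    have const : ∀ a b : RelComma D E R ρ k,
        (L (Db.obj a.pt) (E.obj k) (phiMap D E R ρ Db hDb a)).1 =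
        (L (Db.obj b.pt) (E.obj k) (phiMap D E R ρ Db hDb b)).1 := by
      refine constant_of_preserves_morphisms _ ?_
      intro a b h
      have key : (⟨(L (Db.obj b.pt) (E.obj k) (phiMap D E R ρ Db hDb b)).1,
          Db.map h.1 ≫ (L (Db.obj b.pt) (E.obj k) (phiMap D E R ρ Db hDb b)).2⟩ :
          Σ e', Db.obj a.pt ⟶ e') =
          L (Db.obj a.pt) (E.obj k) (phiMap D E R ρ Db hDb a) := by
        refine hLu _ _ _ _ ⟨hLo _ _ _, ?_⟩
        rw [Functor.map_comp, Category.assoc, hLm, hDmap h.1]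
        simp only [phiMap, Category.assoc, eqToHom_trans_assoc, eqToHom_refl,
          Category.id_comp]
        rw [h.2]
      exact (congrArg Sigma.fst key).symm
    have a0 : RelComma D E R ρ k := Classical.arbitrary _
    refine ⟨(L (Db.obj a0.pt) (E.obj k) (phiMap D E R ρ Db hDb a0)).1, hLo _ _ _, ?_, ?_⟩
    · intro a
      have hex : π.map ((L (Db.obj a.pt) (E.obj k) (phiMap D E R ρ Db hDb a)).2 ≫
          eqToHom (const a a0)) = phiMap D E R ρ Db hDb a ≫ eqToHom (hLo _ _ _ :
            π.obj (L (Db.obj a0.pt) (E.obj k) (phiMap D E R ρ Db hDb a0)).1 =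
              E.obj k).symm := by
        rw [Functor.map_comp, eqToHom_map]
        have h2 := (comp_eqToHom_iff _ _ _).mp
          (hLm (Db.obj a.pt) (E.obj k) (phiMap D E R ρ Db hDb a))
        rw [h2]
        simp
      refine ⟨_, hex, ?_⟩
      intro q hq
      apply hinj
      rw [hq, hex]
    · intro a p hp
      have := hLu _ _ _ p hp
      rw [congrArg Sigma.fst this]
      exact const a a0
  choose obar hobar hmain using main
  have hℓex := fun k => (hmain k).1
  have hcod := fun k => (hmain k).2
  choose ℓ hℓs hℓu using hℓex
  -- Step 2: the morphism part
  have maps : ∀ (k k' : K) (g : k ⟶ k'), ∃! m : obar k ⟶ obar k',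
      π.map m = eqToHom (hobar k) ≫ E.map g ≫ eqToHom (hobar k').symm := by
    intro k k' g
    haveI := hrel k
    have a0 : RelComma D E R ρ k := Classical.arbitrary _
    have hcodEq : (L (obar k) (E.obj k') (eqToHom (hobar k) ≫ E.map g)).1 = obar k' := by
      apply hcod k' ⟨a0.pt, a0.arr ≫ g⟩
        ⟨(L (obar k) (E.obj k') (eqToHom (hobar k) ≫ E.map g)).1,
          ℓ k a0 ≫ (L (obar k) (E.obj k') (eqToHom (hobar k) ≫ E.map g)).2⟩
      refine ⟨hLo _ _ _, ?_⟩
      rw [Functor.map_comp, Category.assoc, hLm, hℓs]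
      simp [phiMap]
    have hex : π.map ((L (obar k) (E.obj k') (eqToHom (hobar k) ≫ E.map g)).2 ≫
        eqToHom hcodEq) = eqToHom (hobar k) ≫ E.map g ≫ eqToHom (hobar k').symm := by
      rw [Functor.map_comp, eqToHom_map]
      have h2 := (comp_eqToHom_iff _ _ _).mp
        (hLm (obar k) (E.obj k') (eqToHom (hobar k) ≫ E.map g))
      rw [h2]
      simp
    refine ⟨_, hex, ?_⟩
    intro q hq
    apply hinj
    rw [hq, hex]
  choose Em hEm hEmu using maps
  -- Step 3: compatibility of the canonical lifts with the morphism part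
  have compat : ∀ (k k' : K) (g : k ⟶ k') (a : RelComma D E R ρ k),
      ℓ k a ≫ Em k k' g = ℓ k' ⟨a.pt, a.arr ≫ g⟩ := by
    intro k k' g a
    refine hℓu k' ⟨a.pt, a.arr ≫ g⟩ _ ?_
    show π.map (ℓ k a ≫ Em k k' g) = _
    rw [Functor.map_comp, hℓs, hEm]
    simp [phiMap]
  -- Step 4: assemble the functor and the natural transformation
  obtain ⟨Ebar, hEobj, hEmap, ρb, hρb⟩ :
      ∃ (Ebar : K ⥤ Eb) (hEobj : ∀ k, Ebar.obj k = obar k),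
        (∀ (k k' : K) (g : k ⟶ k'),
          Ebar.map g = eqToHom (hEobj k) ≫ Em k k' g ≫ eqToHom (hEobj k').symm) ∧
        ∃ ρb : Db ⟶ R ⋙ Ebar, ∀ j : J,
          ρb.app j = ℓ (R.obj j) ⟨j, 𝟙 (R.obj j)⟩ ≫ eqToHom (hEobj (R.obj j)).symm := by
    refine ⟨{ obj := obar
              map := fun g => Em _ _ g
              map_id := ?_
              map_comp := ?_ },
      fun _ => rfl, fun _ _ _ => by simp,
      ⟨{ app := fun j => ℓ (R.obj j) ⟨j, 𝟙 (R.obj j)⟩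
         naturality := ?_ },
        fun j => by simp⟩⟩
    · intro k
      symm
      apply hEmu
      simp
    · intro k k' k'' g g'
      symm
      apply hEmu
      show π.map (Em k k' g ≫ Em k' k'' g') = _
      rw [Functor.map_comp, hEm, hEm]
      simp
    · intro j j' u
      show Db.map u ≫ ℓ (R.obj j') ⟨j', 𝟙 (R.obj j')⟩ =
        ℓ (R.obj j) ⟨j, 𝟙 (R.obj j)⟩ ≫ Em (R.obj j) (R.obj j') (R.map u)
      rw [compat]
      refine hℓu (R.obj j') ⟨j, 𝟙 (R.obj j) ≫ R.map u⟩ _ ?_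
      show π.map (Db.map u ≫ ℓ (R.obj j') ⟨j', 𝟙 (R.obj j')⟩) = _
      rw [Functor.map_comp, hℓs, hDmap u]
      simp only [phiMap, Category.assoc, eqToHom_trans_assoc, eqToHom_refl,
        Category.id_comp, Functor.map_id, Category.comp_id]
      rw [← Category.assoc (D.map u), ρ.naturality u]
      simp
  have hEπobj : ∀ k, π.obj (Ebar.obj k) = E.obj k := by
    intro k; rw [hEobj]; exact hobar k
  have hπEm : ∀ (k k' : K) (g : k ⟶ k'), π.map (Ebar.map g) =
      eqToHom (hEπobj k) ≫ E.map g ≫ eqToHom (hEπobj k').symm := by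
    intro k k' g
    rw [hEmap, Functor.map_comp, Functor.map_comp, eqToHom_map, eqToHom_map, hEm]
    simp
  have hEπ : Ebar ⋙ π = E := by
    refine CategoryTheory.Functor.ext hEπobj ?_
    intro k k' g
    exact hπEm k k' g
  refine ⟨⟨⟨Ebar, hEπ⟩, ρb⟩, ?_, ?_⟩
  · intro j
    rw [hρb, Functor.map_comp, eqToHom_map, hℓs]
    simp [phiMap]
  · rintro ⟨⟨F, hF⟩, σ⟩ hcondq
    dsimp only at hcondq
    have hFmap : ∀ {k k' : K} (g : k ⟶ k'), π.map (F.map g) =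
        eqToHom (Functor.congr_obj hF k) ≫ E.map g ≫
          eqToHom (Functor.congr_obj hF k').symm := by
      intro k k' g
      have := Functor.congr_hom hF g
      simp only [Functor.comp_map] at this
      exact this
    -- the composite lifts of the comma objects through F
    have ha : ∀ (k : K) (a : RelComma D E R ρ k),
        π.map (σ.app a.pt ≫ F.map a.arr) =
          phiMap D E R ρ Db hDb a ≫ eqToHom (Functor.congr_obj hF k).symm := by
      intro k a
      rw [Functor.map_comp, hcondq, hFmap a.arr]
      simp [phiMap]
    have hFobj : ∀ k : K, F.obj k = obar k := by
      intro k
      haveI := hrel k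
      have a0 : RelComma D E R ρ k := Classical.arbitrary _
      refine hcod k a0 ⟨F.obj k, σ.app a0.pt ≫ F.map a0.arr⟩
        ⟨Functor.congr_obj hF k, ?_⟩
      rw [ha]
      simp
    have hσℓ : ∀ (k : K) (a : RelComma D E R ρ k),
        σ.app a.pt ≫ F.map a.arr ≫ eqToHom (hFobj k) = ℓ k a := by
      intro k a
      refine hℓu k a _ ?_
      show π.map (σ.app a.pt ≫ F.map a.arr ≫ eqToHom (hFobj k)) = _
      rw [← Category.assoc, Functor.map_comp, eqToHom_map, ha]
      simp
    have hFE : F = Ebar := by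
      refine CategoryTheory.Functor.ext (fun k => (hFobj k).trans (hEobj k).symm) ?_
      intro k k' g
      apply hinj
      rw [Functor.map_comp, Functor.map_comp, eqToHom_map,
        eqToHom_map, hπEm, hFmap g]
      simp
    subst hFE
    have hσ : σ = ρb := by
      ext j
      have h1 := hσℓ (R.obj j) ⟨j, 𝟙 (R.obj j)⟩
      simp only [CategoryTheory.Functor.map_id, Category.id_comp] at h1
      rw [hρb j, ← h1]
      simp
    rw [hσ]
end
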